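/- Let ℍ_ℝ be the algebra of real quaternions. ℝ-linear maps f, g, h : ℍ_ℝ → ℍ_ℝ are such that f is a Jordan left {g,h}-derivation if and only if g = h and there exists a quaternion α ∈ ℍ_ℝ such that g(q) = qα and f(q) = 2qα for all q ∈ ℍ_ℝ. In particular, if f is a Jordan left {g,h}-derivation on ℍ_ℝ then f and g are right centralizers. -/

import Mathlib

open scoped Quaternion

/-! Comparing the defining identity at `(a, b)` and at `(b, a)` shows that `g - h` is right
multiplication by `δ = g 1 - h 1`, so every commutator `a b - b a` annihilates `δ`; in a
noncommutative domain such as `ℍ` this forces `δ = 0`, i.e. `g = h`. Then `a = 1` gives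
`f x = g x + x g 1`, and `a = b = u` with `u² = -1` gives `g u = u g 1`. The quaternions `1, i, j, k`
span `ℍ` and `i² = j² = k² = -1`, so `g` is right multiplication by `α = g 1` and `f = 2 g`. -/

def IsJordanLeftDerivation {A : Type*} [Ring A] (f g h : A → A) : Prop :=
  ∀ a b : A, f (a * b + b * a) = 2 • (a * g b + b * h a)

section

variable {A : Type*} [Ring A]

theorem isJordanLeftDerivation_of_apply_eq_mul {f g : A → A} {α : A} (hg : ∀ q, g q = q * α)
    (hf : ∀ q, f q = 2 • (q * α)) : IsJordanLeftDerivation f g g := fun a b => by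
  rw [hf, hg, hg, add_mul, mul_assoc, mul_assoc]

namespace IsJordanLeftDerivation

variable [IsAddTorsionFree A] {F : Type*} [FunLike F A A] {f g h : F}

theorem mul_add_mul_comm (hD : IsJordanLeftDerivation f g h) (a b : A) :
    a * g b + b * h a = b * g a + a * h b :=
  (nsmul_right_inj two_ne_zero).mp <| by rw [← hD, ← hD, add_comm]

theorem sub_apply_eq_mul (hD : IsJordanLeftDerivation f g h) (b : A) :
    g b - h b = b * (g 1 - h 1) := by
  rw [mul_sub, sub_eq_sub_iff_add_eq_add]
  simpa only [one_mul] using hD.mul_add_mul_comm 1 b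

theorem apply_eq_of_not_commute [NoZeroDivisors A] (hD : IsJordanLeftDerivation f g h)
    {p q : A} (hpq : ¬Commute p q) (x : A) : g x = h x := by
  have hcomm : (p * q - q * p) * (g 1 - h 1) = 0 := by
    rw [sub_mul, mul_assoc, mul_assoc, ← hD.sub_apply_eq_mul, ← hD.sub_apply_eq_mul, sub_eq_zero,
      mul_sub, mul_sub, sub_eq_sub_iff_add_eq_add]
    exact hD.mul_add_mul_comm p q
  have hδ : g 1 - h 1 = 0 := (mul_eq_zero.mp hcomm).resolve_left (sub_ne_zero.mpr hpq)
  rw [← sub_eq_zero, hD.sub_apply_eq_mul, hδ, mul_zero]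

variable [AddMonoidHomClass F A A]

theorem apply_eq_add_mul (hD : IsJordanLeftDerivation f g g) (x : A) : f x = g x + x * g 1 :=
  (nsmul_right_inj two_ne_zero).mp <| by
    simpa only [one_mul, mul_one, ← two_nsmul, map_nsmul] using hD 1 x

theorem apply_eq_mul_apply_one_of_mul_self_eq_neg_one (hD : IsJordanLeftDerivation f g g)
    {u : A} (hu : u * u = -1) : g u = u * g 1 := by
  have hu' : u * g u = -g 1 := by
    have h := hD u u
    rw [hu, map_add, map_neg, hD.apply_eq_add_mul, one_mul] at h
    refine (nsmul_right_inj (n := 4) (by norm_num)).mp ?_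
    abel_nf at h ⊢
    exact h.symm
  simpa [← mul_assoc, hu] using congrArg (u * ·) hu'

end IsJordanLeftDerivation

end

namespace Quaternion

variable {R : Type*} [CommRing R]

theorem not_commute_i_j [NeZero (2 : R)] : ¬Commute (⟨0, 1, 0, 0⟩ : ℍ[R]) ⟨0, 0, 1, 0⟩ := by
  intro h
  have h_imK := congrArg QuaternionAlgebra.imK h
  simp only [QuaternionAlgebra.mk_mul_mk] at h_imK
  exact two_ne_zero (by linear_combination h_imK : (2 : R) = 0)

theorem linearMap_eq_mulRight_of_mul_self_eq_neg_one (g : ℍ[R] →ₗ[R] ℍ[R])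
    (hg : ∀ u : ℍ[R], u * u = -1 → g u = u * g 1) : g = LinearMap.mulRight R (g 1) := by
  have hi : ((⟨0, 1, 0, 0⟩ : ℍ[R]) * ⟨0, 1, 0, 0⟩) = -1 := by ext <;> simp
  have hj : ((⟨0, 0, 1, 0⟩ : ℍ[R]) * ⟨0, 0, 1, 0⟩) = -1 := by ext <;> simp
  have hk : ((⟨0, 0, 0, 1⟩ : ℍ[R]) * ⟨0, 0, 0, 1⟩) = -1 := by ext <;> simp
  refine (QuaternionAlgebra.basisOneIJK _ _ _).ext fun n => ?_
  fin_cases n <;> simp only [QuaternionAlgebra.basisOneIJK, Module.Basis.coe_ofEquivFun,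
    QuaternionAlgebra.coe_linearEquivTuple_symm, QuaternionAlgebra.equivTuple_symm_apply]
  · exact (one_mul (g 1)).symm
  · exact hg _ hi
  · exact hg _ hj
  · exact hg _ hk

end Quaternion

/-- `f` is a Jordan left `{g,h}`-derivation on the real quaternions iff
`g = h` and there is a quaternion `α` with `g q = q * α` and `f q = 2 • (q * α)`;
in particular `f` and `g` are then right centralizers. -/
theorem jordan_left_gh_derivation_quaternion_iff
    (f g h : ℍ[ℝ] →ₗ[ℝ] ℍ[ℝ]) :
    ((∀ p q : ℍ[ℝ], f (p * q + q * p) = 2 • (p * g q + q * h p)) ↔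
      (g = h ∧ ∃ α : ℍ[ℝ], (∀ q : ℍ[ℝ], g q = q * α) ∧
        (∀ q : ℍ[ℝ], f q = 2 • (q * α)))) ∧
    ((∀ p q : ℍ[ℝ], f (p * q + q * p) = 2 • (p * g q + q * h p)) →
      (∀ p q : ℍ[ℝ], f (p * q) = p * f q) ∧
      (∀ p q : ℍ[ℝ], g (p * q) = p * g q)) := by
  have := IsAddTorsionFree.of_module_nnrat ℍ[ℝ]
  have characterization : IsJordanLeftDerivation f g h ↔
      g = h ∧ ∃ α, (∀ q, g q = q * α) ∧ ∀ q, f q = 2 • (q * α) := by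
    refine ⟨fun hD => ?_, fun ⟨hgh, α, hg, hf⟩ => hgh ▸ isJordanLeftDerivation_of_apply_eq_mul hg hf⟩
    obtain rfl : g = h := LinearMap.ext (hD.apply_eq_of_not_commute Quaternion.not_commute_i_j)
    have hg : ∀ q, g q = q * g 1 := LinearMap.congr_fun <|
      Quaternion.linearMap_eq_mulRight_of_mul_self_eq_neg_one g fun u hu =>
        hD.apply_eq_mul_apply_one_of_mul_self_eq_neg_one hu
    exact ⟨rfl, g 1, hg, fun q => by rw [hD.apply_eq_add_mul, hg, two_nsmul]⟩
  refine ⟨characterization, fun hD => ?_⟩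
  obtain ⟨-, α, hg, hf⟩ := characterization.mp hD
  exact ⟨fun p q => by rw [hf, hf, mul_smul_comm, mul_assoc], fun p q => by rw [hg, hg, mul_assoc]⟩
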